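/- Let the Σ₂ family {p₀, p₂, p₃, p₄, …} be multiplicatively closed with z² p_j in its ℂ-linear span for every j. Then in ℂ((z⁻¹)), with λ = z², the element p₃ satisfies the elliptic curve equation p₃² = λ³ + 2H³₋₁ λ² + ((H³₋₁)² + 2H³₁) λ + 2H³₋₁ H³₁ + 2H³₃. -/

import Mathlib

/-! The coefficients of `z^m` for `m ∈ {0, 2, 3, …}` are biorthogonal to the family (the one of
`p_i` is `δ_{im}`), so an element of the span is determined by them. Hence `p₀² = p₀`, so
`p₀ = 1`; then `z² = z² p₀` lies in the span, which forces `p₂ = z²`, and inductively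
`p_{2k} = λ^k`. Finally `p₃²` and the cubic in `λ` both lie in the span and share these
coefficients. -/

open Finset

noncomputable section

/-- `z^j` viewed as a formal Laurent series in `t = z⁻¹` (so `z^j = t^(-j)`). -/
def zp (j : ℤ) : LaurentSeries ℂ := HahnSeries.single (-j) 1

/-- The element `p₀ = 1 + ∑_{k ≥ 1} H^0_k z^(-k)` of the `Σ₂` family. -/
def sigma2zero (H : ℕ → ℤ → ℂ) : LaurentSeries ℂ :=
  1 + HahnSeries.ofPowerSeries ℤ ℂ (PowerSeries.mk fun k => if 1 ≤ k then H 0 (k:ℤ) else 0)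

/-- The elements `p_j = z^j + H^j_{-1} z + ∑_{k ≥ 1} H^j_k z^(-k)`, `j ≥ 2`, of the `Σ₂`
family. -/
def sigma2 (H : ℕ → ℤ → ℂ) (j : ℕ) : LaurentSeries ℂ :=
  zp j + H j (-1) • zp 1
    + HahnSeries.ofPowerSeries ℤ ℂ (PowerSeries.mk fun k => if 1 ≤ k then H j (k:ℤ) else 0)

/-- The `Σ₂` family `{p₀, p₂, p₃, p₄, …}` as a set of Laurent series. -/
def sigma2Set (H : ℕ → ℤ → ℂ) : Set (LaurentSeries ℂ) :=
  insert (sigma2zero H) (sigma2 H '' {j | 2 ≤ j})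

theorem eq_zero_of_mem_span_image_of_biorthogonal {ι R M : Type*} [CommSemiring R]
    [AddCommMonoid M] [Module R M] [DecidableEq ι] {f : ι → M} {φ : ι → M →ₗ[R] R} {s : Set ι}
    (hφ : ∀ i ∈ s, ∀ k ∈ s, φ i (f k) = if i = k then 1 else 0) {v : M}
    (hv : v ∈ Submodule.span R (f '' s)) (h : ∀ i ∈ s, φ i v = 0) : v = 0 := by
  obtain ⟨l, hl, rfl⟩ := (Finsupp.mem_span_image_iff_linearCombination R).mp hv
  suffices l = 0 by simp [this]
  ext i
  by_cases hi : i ∈ s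
  · rw [Finsupp.coe_zero, Pi.zero_apply, ← h i hi, Finsupp.apply_linearCombination,
      Finsupp.linearCombination_apply, Finsupp.sum, Finset.sum_congr rfl fun k hk => by
        rw [Function.comp_apply, hφ i hi k (hl hk)]]
    simp
  · exact (Finsupp.mem_supported' R l).1 hl i hi

theorem coeff_zp (j n : ℤ) : (zp j).coeff n = if n = -j then 1 else 0 := by
  simp [zp, HahnSeries.coeff_single]

theorem coeff_zp_mul (j : ℤ) (x : LaurentSeries ℂ) (n : ℤ) :
    (zp j * x).coeff n = x.coeff (n + j) := by
  rw [zp]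
  simpa using HahnSeries.coeff_single_mul_add (r := (1 : ℂ)) (x := x) (a := n + j) (b := -j)

theorem zp_mul_zp (i j : ℤ) : zp i * zp j = zp (i + j) := by
  rw [zp, zp, zp, HahnSeries.single_mul_single, one_mul, neg_add]

theorem zp_zero : zp 0 = 1 := by
  rw [zp, neg_zero, HahnSeries.single_zero_one]

theorem zp_pow (j : ℤ) (n : ℕ) : zp j ^ n = zp (n * j) := by
  induction n with
  | zero => simp [zp_zero]
  | succ n ih => rw [pow_succ, ih, zp_mul_zp]; push_cast; ring_nf

section Sigma2

variable (H : ℕ → ℤ → ℂ)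

def sigma2Tail (j : ℕ) : LaurentSeries ℂ :=
  HahnSeries.ofPowerSeries ℤ ℂ (PowerSeries.mk fun k => if 1 ≤ k then H j (k:ℤ) else 0)

theorem sigma2zero_eq_one_add : sigma2zero H = 1 + sigma2Tail H 0 := rfl

theorem sigma2_eq_add (j : ℕ) : sigma2 H j = zp j + H j (-1) • zp 1 + sigma2Tail H j := rfl

theorem coeff_sigma2Tail (j : ℕ) (n : ℤ) :
    (sigma2Tail H j).coeff n = if 1 ≤ n then H j n else 0 := by
  rw [sigma2Tail, PowerSeries.coeff_coe, PowerSeries.coeff_mk]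
  split_ifs <;> first | omega | rfl | rw [Int.natAbs_of_nonneg (by omega)]

theorem coeff_sigma2Tail_mul_sigma2Tail (i j : ℕ) {n : ℤ} (hn : n ≤ 0) :
    (sigma2Tail H i * sigma2Tail H j).coeff n = 0 := by
  rw [sigma2Tail, sigma2Tail, ← map_mul, PowerSeries.coeff_coe]
  split_ifs with h
  · rfl
  · rw [show n.natAbs = 0 by omega, PowerSeries.coeff_zero_eq_constantCoeff, map_mul]
    simp

theorem coeff_sigma2zero_neg (m : ℕ) : (sigma2zero H).coeff (-m) = if m = 0 then 1 else 0 := by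
  rw [sigma2zero_eq_one_add, HahnSeries.coeff_add, coeff_sigma2Tail, HahnSeries.coeff_one]
  split_ifs <;> first | omega | simp

theorem coeff_sigma2_neg (j m : ℕ) (hm : m ≠ 1) :
    (sigma2 H j).coeff (-m) = if m = j then 1 else 0 := by
  rw [sigma2_eq_add, HahnSeries.coeff_add, HahnSeries.coeff_add, HahnSeries.coeff_smul,
    coeff_zp, coeff_zp, coeff_sigma2Tail]
  split_ifs <;> first | omega | simp

/-- Indexes the family by `i ≠ 1`, with `p₀` at `0`; the value at `1` is never used. -/
def sigma2Family (i : ℕ) : LaurentSeries ℂ := if i = 0 then sigma2zero H else sigma2 H i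

theorem sigma2Set_subset_image : sigma2Set H ⊆ sigma2Family H '' {i | i ≠ 1} := by
  rintro x (rfl | ⟨j, hj, rfl⟩)
  · exact ⟨0, zero_ne_one, rfl⟩
  · have hj : 2 ≤ j := hj
    exact ⟨j, show j ≠ 1 by omega, if_neg (by omega)⟩

theorem eq_zero_of_mem_span_sigma2Set {v : LaurentSeries ℂ}
    (hv : v ∈ Submodule.span ℂ (sigma2Set H)) (h : ∀ m : ℕ, m ≠ 1 → v.coeff (-m) = 0) :
    v = 0 := by
  refine eq_zero_of_mem_span_image_of_biorthogonal
    (φ := fun m : ℕ => HahnSeries.coeff.linearMap (R := ℂ) (-(m : ℤ)))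
    (fun m hm i _ => ?_) (Submodule.span_mono (sigma2Set_subset_image H) hv) h
  change (sigma2Family H i).coeff (-(m : ℤ)) = if m = i then 1 else 0
  rcases eq_or_ne i 0 with rfl | hi
  · exact coeff_sigma2zero_neg H m
  · rw [sigma2Family, if_neg hi, coeff_sigma2_neg H i m hm]

theorem eq_of_mem_span_sigma2Set {v w : LaurentSeries ℂ}
    (hv : v ∈ Submodule.span ℂ (sigma2Set H)) (hw : w ∈ Submodule.span ℂ (sigma2Set H))
    (h : ∀ m : ℕ, m ≠ 1 → v.coeff (-m) = w.coeff (-m)) : v = w :=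
  sub_eq_zero.mp <| eq_zero_of_mem_span_sigma2Set H (Submodule.sub_mem _ hv hw) fun m hm => by
    rw [HahnSeries.coeff_sub, h m hm, sub_self]

theorem sigma2zero_eq_one (h : sigma2zero H ^ 2 ∈ Submodule.span ℂ (sigma2Set H)) :
    sigma2zero H = 1 := by
  have hp0 : sigma2zero H ∈ Submodule.span ℂ (sigma2Set H) :=
    Submodule.subset_span (Set.mem_insert _ _)
  have hidem : IsIdempotentElem (sigma2zero H) := by
    refine (sq _).symm.trans (eq_of_mem_span_sigma2Set H h hp0 fun m _ => ?_)
    rw [sigma2zero_eq_one_add, add_sq, HahnSeries.coeff_add, HahnSeries.coeff_add,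
      HahnSeries.coeff_add, one_pow, sq, coeff_sigma2Tail_mul_sigma2Tail H 0 0 (by omega),
      mul_one, two_mul, HahnSeries.coeff_add, coeff_sigma2Tail, if_neg (by omega)]
    simp
  refine (IsIdempotentElem.iff_eq_zero_or_one.mp hidem).resolve_left fun h0 => ?_
  simpa [h0] using coeff_sigma2zero_neg H 0

theorem sigma2_eq_zp_of_mem_span {j : ℕ} (hj : 2 ≤ j)
    (h : zp j ∈ Submodule.span ℂ (sigma2Set H)) : sigma2 H j = zp j :=
  eq_of_mem_span_sigma2Set H (Submodule.subset_span (Set.mem_insert_of_mem _ ⟨j, hj, rfl⟩)) h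
    fun m hm => by rw [coeff_sigma2_neg H j m hm, coeff_zp]; simp

theorem zp_two_pow_mem_sigma2Set (h0 : sigma2zero H = 1)
    (hz2 : ∀ x ∈ sigma2Set H, zp 2 * x ∈ Submodule.span ℂ (sigma2Set H)) (k : ℕ) :
    zp 2 ^ k ∈ sigma2Set H := by
  induction k with
  | zero => rw [pow_zero, ← h0]; exact Set.mem_insert _ _
  | succ k ih =>
    have hj : 2 ≤ 2 * (k + 1) := by omega
    have hzk : zp 2 ^ (k + 1) = zp ((2 * (k + 1) : ℕ) : ℤ) := by rw [zp_pow]; push_cast; ring_nf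
    have hspan : zp 2 ^ (k + 1) ∈ Submodule.span ℂ (sigma2Set H) := pow_succ' (zp 2) k ▸ hz2 _ ih
    rw [hzk, ← sigma2_eq_zp_of_mem_span H hj (hzk ▸ hspan)]
    exact Set.mem_insert_of_mem _ ⟨_, hj, rfl⟩

theorem coeff_sigma2_three_sq_neg (m : ℕ) (hm : m ≠ 1) :
    (sigma2 H 3 ^ 2).coeff (-m) = (zp 2 ^ 3 + (2 * H 3 (-1)) • zp 2 ^ 2
        + ((H 3 (-1)) ^ 2 + 2 * H 3 1) • zp 2
        + HahnSeries.C (2 * H 3 (-1) * H 3 1 + 2 * H 3 3)).coeff (-m) := by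
  have hexp : sigma2 H 3 ^ 2 = zp 3 * zp 3 + (2 * H 3 (-1)) • (zp 3 * zp 1)
      + H 3 (-1) ^ 2 • (zp 1 * zp 1) + (2 : ℂ) • (zp 3 * sigma2Tail H 3)
      + (2 * H 3 (-1)) • (zp 1 * sigma2Tail H 3) + sigma2Tail H 3 * sigma2Tail H 3 := by
    rw [sigma2_eq_add]
    simp only [← HahnSeries.C_mul_eq_smul, map_mul, map_ofNat, map_pow, Nat.cast_ofNat]
    ring
  rw [hexp, zp_pow, zp_pow, HahnSeries.C_apply]
  simp only [HahnSeries.coeff_add, HahnSeries.coeff_smul, smul_eq_mul, coeff_zp_mul, coeff_zp,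
    coeff_sigma2Tail, coeff_sigma2Tail_mul_sigma2Tail H 3 3 (by omega : -(m : ℤ) ≤ 0),
    HahnSeries.coeff_single]
  rcases m with _ | _ | _ | m
  · norm_num; ring
  · exact absurd rfl hm
  · norm_num
  · split_ifs <;> first | omega | ring

end Sigma2

/-- The elliptic curve equation satisfied by `p₃` in the closed subset `W₂ ⊂ Σ₂`:
`p₃² = λ³ + 2H³₋₁ λ² + ((H³₋₁)² + 2H³₁) λ + 2H³₋₁H³₁ + 2H³₃`, where `λ = z²`. -/
theorem sigma2_elliptic_curve (H : ℕ → ℤ → ℂ)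
    (hmul : ∀ x ∈ sigma2Set H, ∀ y ∈ sigma2Set H, x * y ∈ Submodule.span ℂ (sigma2Set H))
    (hz2 : ∀ x ∈ sigma2Set H, zp 2 * x ∈ Submodule.span ℂ (sigma2Set H)) :
    sigma2 H 3 ^ 2
      = zp 2 ^ 3 + (2 * H 3 (-1)) • zp 2 ^ 2
        + ((H 3 (-1))^2 + 2 * H 3 1) • zp 2
        + HahnSeries.C (2 * H 3 (-1) * H 3 1 + 2 * H 3 3) := by
  have hp0 : sigma2zero H ∈ sigma2Set H := Set.mem_insert _ _
  have hp3 : sigma2 H 3 ∈ sigma2Set H := Set.mem_insert_of_mem _ ⟨3, by norm_num, rfl⟩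
  have hpow : ∀ k, zp 2 ^ k ∈ Submodule.span ℂ (sigma2Set H) := fun k =>
    Submodule.subset_span <|
      zp_two_pow_mem_sigma2Set H (sigma2zero_eq_one H (by rw [sq]; exact hmul _ hp0 _ hp0)) hz2 k
  refine eq_of_mem_span_sigma2Set H (by rw [sq]; exact hmul _ hp3 _ hp3) ?_
    (coeff_sigma2_three_sq_neg H)
  have hC (c : ℂ) : HahnSeries.C c = c • zp 2 ^ 0 := by
    rw [pow_zero, ← HahnSeries.C_mul_eq_smul, mul_one]
  rw [hC]
  refine add_mem (add_mem (add_mem (hpow 3) (Submodule.smul_mem _ _ (hpow 2)))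
    (Submodule.smul_mem _ _ (pow_one (zp 2) ▸ hpow 1))) (Submodule.smul_mem _ _ (hpow 0))
end
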